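/- arXiv:2411.15814 — 3 statements merged into one kernel-verified Lean document; each statement's English description precedes it below -/
import Mathlib

section
/- There exists a_0 > 0 such that for all |a| < a_0 and beta > 1, the equation m = tanh(beta*(m + a)) has at least three distinct real solutions. -/
open Real

/-- tanh is strictly less than 1. -/
lemma tanh_lt_one' (x : ℝ) : Real.tanh x < 1 := by
  rw [Real.tanh_eq_sinh_div_cosh, div_lt_one (Real.cosh_pos x)]
  nlinarith [Real.cosh_sub_sinh x, Real.exp_pos (-x)]

/-- tanh is strictly greater than -1. -/
lemma neg_one_lt_tanh' (x : ℝ) : -1 < Real.tanh x := by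
  rw [Real.tanh_eq_sinh_div_cosh, lt_div_iff₀ (Real.cosh_pos x)]
  nlinarith [Real.cosh_add_sinh x, Real.exp_pos x]

lemma continuous_tanh' : Continuous Real.tanh := by
  have : Real.tanh = fun x => Real.sinh x / Real.cosh x := by
    funext x; exact Real.tanh_eq_sinh_div_cosh x
  rw [this]
  exact Real.continuous_sinh.div Real.continuous_cosh (fun x => (Real.cosh_pos x).ne')

/-- key lower bound: if 0 < y, cosh y < c, then y / c < tanh y -/
lemma tanh_key (y c : ℝ) (hy : 0 < y) (hc : Real.cosh y < c) : y / c < Real.tanh y := by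
  have hcpos : 0 < c := lt_trans (Real.cosh_pos y) hc
  rw [Real.tanh_eq_sinh_div_cosh, div_lt_div_iff₀ hcpos (Real.cosh_pos y)]
  have h1 : y < Real.sinh y := Real.self_lt_sinh_iff.mpr hy
  nlinarith [Real.cosh_pos y]

/-- There exists a₀ > 0 such that for all |a| < a₀ the equation
m = tanh(β (m + a)) has at least three distinct real solutions (β > 1). -/
theorem heis_stmt_1 (β : ℝ) (hβ : 1 < β) :
    ∃ a₀ : ℝ, 0 < a₀ ∧
      ∀ a : ℝ, |a| < a₀ →
        ∃ m₁ m₂ m₃ : ℝ, m₁ ≠ m₂ ∧ m₁ ≠ m₃ ∧ m₂ ≠ m₃ ∧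
          m₁ = Real.tanh (β * (m₁ + a)) ∧
          m₂ = Real.tanh (β * (m₂ + a)) ∧
          m₃ = Real.tanh (β * (m₃ + a)) := by
  set β' : ℝ := (1 + β) / 2 with hβ'def
  have hβ'1 : 1 < β' := by simp only [hβ'def]; linarith
  have hβ'β : β' < β := by simp only [hβ'def]; linarith
  have hβpos : (0:ℝ) < β := by linarith
  -- find δ > 0 such that cosh y < β' for |y| < δ
  have hcont : Filter.Tendsto Real.cosh (nhds 0) (nhds 1) := by
    have := Real.continuous_cosh.continuousAt (x := (0:ℝ))
    rwa [ContinuousAt, Real.cosh_zero] at this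
  have hev : ∀ᶠ y in nhds (0:ℝ), Real.cosh y < β' :=
    hcont.eventually (Filter.Tendsto.eventually_lt_const hβ'1 Filter.tendsto_id)
  obtain ⟨δ, hδpos, hδ⟩ := Metric.eventually_nhds_iff.mp hev
  -- choose ε and a₀
  set ε : ℝ := min (δ / (4 * β)) 1 with hεdef
  have hεpos : 0 < ε := lt_min (by positivity) one_pos
  have hεle : ε ≤ δ / (4 * β) := min_le_left _ _
  have hεle1 : ε ≤ 1 := min_le_right _ _
  set a₀ : ℝ := ε * (β - β') / (2 * β) with ha₀def
  have ha₀pos : 0 < a₀ := by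
    apply div_pos (mul_pos hεpos (by linarith)) (by linarith)
  have ha₀ε : a₀ < ε := by
    rw [ha₀def, div_lt_iff₀ (by linarith : (0:ℝ) < 2 * β)]
    nlinarith
  refine ⟨a₀, ha₀pos, fun a ha => ?_⟩
  have ha1 : -a₀ < a := neg_lt_of_abs_lt ha
  have ha2 : a < a₀ := lt_of_abs_lt ha
  -- key: for t ∈ [ε - a₀, ε + a₀], ε < tanh (β t)
  have key : ∀ t : ℝ, ε - a₀ ≤ t → t ≤ ε + a₀ → ε < Real.tanh (β * t) := by
    intro t ht1 ht2
    have htpos : 0 < t := by linarith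
    have hbtpos : 0 < β * t := mul_pos hβpos htpos
    have hbtδ : β * t < δ := by
      have : β * t ≤ β * (ε + a₀) := by nlinarith
      have h2 : β * (ε + a₀) < β * (2 * ε) := by nlinarith
      have h3 : β * (2 * ε) ≤ δ / 2 := by
        have := hεle
        rw [le_div_iff₀ (by positivity : (0:ℝ) < 4 * β)] at this
        linarith
      linarith
    have hcosh : Real.cosh (β * t) < β' := by
      apply hδ
      simp only [Real.dist_eq, sub_zero]
      rw [abs_of_pos hbtpos]; exact hbtδ
    have := tanh_key (β * t) β' hbtpos hcosh
    have hlb : ε < β * t / β' := by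
      rw [lt_div_iff₀ (by linarith : (0:ℝ) < β')]
      have : β * (ε - a₀) ≤ β * t := by nlinarith
      have hkey : ε * β' < β * (ε - a₀) := by
        rw [ha₀def]
        have : β * (ε * (β - β') / (2 * β)) = ε * (β - β') / 2 := by
          field_simp
        rw [mul_sub, this]
        nlinarith
      linarith
    linarith
  -- define g
  set g : ℝ → ℝ := fun m => Real.tanh (β * (m + a)) - m with hgdef
  have hgcont : Continuous g := by
    apply Continuous.sub _ continuous_id
    exact continuous_tanh'.comp (continuous_const.mul (continuous_id.add continuous_const))
  -- sign facts
  have hg2 : g 2 < 0 := by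
    have := tanh_lt_one' (β * (2 + a))
    simp only [hgdef]; linarith
  have hgm2 : 0 < g (-2) := by
    have := neg_one_lt_tanh' (β * (-2 + a))
    simp only [hgdef]; linarith
  have hgε : 0 < g ε := by
    have := key (ε + a) (by linarith) (by linarith)
    simp only [hgdef]; linarith
  have hgmε : g (-ε) < 0 := by
    have h1 := key (ε - a) (by linarith) (by linarith)
    have h2 : Real.tanh (β * (-ε + a)) = - Real.tanh (β * (ε - a)) := by
      rw [← Real.tanh_neg]; ring_nf
    simp only [hgdef]
    rw [h2]; linarith
  have hε2 : ε ≤ 2 := by linarith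
  -- three roots by IVT
  have h1 : (0:ℝ) ∈ Set.Icc (g (-ε)) (g (-2)) := ⟨le_of_lt hgmε, le_of_lt hgm2⟩
  obtain ⟨m₁, hm₁mem, hm₁⟩ := intermediate_value_Icc' (by linarith : (-2:ℝ) ≤ -ε)
    hgcont.continuousOn h1
  have h2 : (0:ℝ) ∈ Set.Icc (g (-ε)) (g ε) := ⟨le_of_lt hgmε, le_of_lt hgε⟩
  obtain ⟨m₂, hm₂mem, hm₂⟩ := intermediate_value_Icc (by linarith : (-ε:ℝ) ≤ ε)
    hgcont.continuousOn h2
  have h3 : (0:ℝ) ∈ Set.Icc (g 2) (g ε) := ⟨le_of_lt hg2, le_of_lt hgε⟩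
  obtain ⟨m₃, hm₃mem, hm₃⟩ := intermediate_value_Icc' (by linarith : (ε:ℝ) ≤ 2)
    hgcont.continuousOn h3
  have hm₁lt : m₁ < -ε := lt_of_le_of_ne hm₁mem.2 (by rintro rfl; rw [hm₁] at hgmε; exact lt_irrefl _ hgmε)
  have hm₂gt : -ε < m₂ := lt_of_le_of_ne hm₂mem.1 (by rintro rfl; rw [hm₂] at hgmε; exact lt_irrefl _ hgmε)
  have hm₂lt : m₂ < ε := lt_of_le_of_ne hm₂mem.2 (fun h => by subst h; rw [hm₂] at hgε; exact lt_irrefl _ hgε)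
  have hm₃gt : ε < m₃ := lt_of_le_of_ne hm₃mem.1 (fun h => by rw [h] at hgε; rw [hm₃] at hgε; exact lt_irrefl _ hgε)
  refine ⟨m₁, m₂, m₃, ne_of_lt (by linarith), ne_of_lt (by linarith), ne_of_lt (by linarith), ?_, ?_, ?_⟩
  · have : Real.tanh (β * (m₁ + a)) - m₁ = 0 := hm₁
    linarith
  · have : Real.tanh (β * (m₂ + a)) - m₂ = 0 := hm₂
    linarith
  · have : Real.tanh (β * (m₃ + a)) - m₃ = 0 := hm₃
    linarith
end

section
/- Let J: R^2 → [0,∞) be integrable, radially symmetric (J(y) = g(|y|)), let m': R → R be bounded measurable, r ∈ R, let A be a symmetric 2×2 real matrix with eigenvector ν (unit length) of eigenvalue 0 and trace k. Then ∫_{R^2} J(y) m'(r + ν·y) (y^T A y) dy = k ∫_{R^2} J(ŷ) m'(r + ŷ1) ŷ2^2 dŷ. -/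
open MeasureTheory
open scoped RealInnerProductSpace

/-!
A symmetric 2×2 matrix with a unit null vector `v` is `trace A • v⊥ v⊥ᵀ`, so its quadratic form
is `trace A * ⟪v⊥, y⟫ ^ 2`. In the orthonormal coordinates `(⟪v, y⟫, ⟪v⊥, y⟫)` the integrand then
becomes `trace A` times the right-hand integrand, while the radial kernel and Lebesgue measure are
unchanged by this isometry.
-/

open Matrix in
theorem Matrix.IsSymm.dotProduct_mulVec_self_eq_trace_mul_sq {A : Matrix (Fin 2) (Fin 2) ℝ}
    (hA : A.IsSymm) {v : Fin 2 → ℝ} (hv : v ⬝ᵥ v = 1) (hAv : A *ᵥ v = 0) (y : Fin 2 → ℝ) :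
    y ⬝ᵥ A *ᵥ y = A.trace * (-v 1 * y 0 + v 0 * y 1) ^ 2 := by
  have hA10 : A 1 0 = A 0 1 := by simpa using congrFun (congrFun hA.eq 0) 1
  have hv' : v 0 * v 0 + v 1 * v 1 = 1 := by simpa [dotProduct, Fin.sum_univ_two] using hv
  have h0 : A 0 0 * v 0 + A 0 1 * v 1 = 0 := by
    simpa [Matrix.mulVec, dotProduct, Fin.sum_univ_two] using congrFun hAv 0
  have h1 : A 0 1 * v 0 + A 1 1 * v 1 = 0 := by
    simpa [Matrix.mulVec, dotProduct, Fin.sum_univ_two, hA10] using congrFun hAv 1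
  have hA00 : A 0 0 = (A 0 0 + A 1 1) * v 1 ^ 2 := by
    linear_combination v 0 * h0 - v 1 * h1 - A 0 0 * hv'
  have hA11 : A 1 1 = (A 0 0 + A 1 1) * v 0 ^ 2 := by
    linear_combination -v 0 * h0 + v 1 * h1 - A 1 1 * hv'
  have hA01 : A 0 1 = -((A 0 0 + A 1 1) * v 0 * v 1) := by
    linear_combination v 1 * h0 + v 0 * h1 - A 0 1 * hv'
  simp only [Matrix.trace_fin_two, dotProduct, Matrix.mulVec, Fin.sum_univ_two, hA10]
  linear_combination y 0 ^ 2 * hA00 + y 1 ^ 2 * hA11 + 2 * y 0 * y 1 * hA01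

namespace EuclideanSpace

def perp (v : EuclideanSpace ℝ (Fin 2)) : EuclideanSpace ℝ (Fin 2) := !₂[-v 1, v 0]

theorem inner_perp_left (v y : EuclideanSpace ℝ (Fin 2)) :
    ⟪perp v, y⟫ = -v 1 * y 0 + v 0 * y 1 := by
  simp [perp, PiLp.inner_apply, Fin.sum_univ_two, mul_comm]

theorem real_inner_perp_self (v : EuclideanSpace ℝ (Fin 2)) : ⟪v, perp v⟫ = 0 := by
  rw [real_inner_comm, inner_perp_left]; ring

theorem norm_perp (v : EuclideanSpace ℝ (Fin 2)) : ‖perp v‖ = ‖v‖ := by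
  simp [perp, EuclideanSpace.norm_eq, Fin.sum_univ_two, add_comm]

theorem orthonormal_perp {v : EuclideanSpace ℝ (Fin 2)} (hv : ‖v‖ = 1) :
    Orthonormal ℝ ![v, perp v] := by
  rw [orthonormal_iff_ite]
  intro i j
  fin_cases i <;> fin_cases j <;> simp [hv, norm_perp, real_inner_perp_self, real_inner_comm]

noncomputable def perpBasis (v : EuclideanSpace ℝ (Fin 2)) (hv : ‖v‖ = 1) :
    OrthonormalBasis (Fin 2) ℝ (EuclideanSpace ℝ (Fin 2)) :=
  OrthonormalBasis.mk (orthonormal_perp hv)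
    ((orthonormal_perp hv).linearIndependent.span_eq_top_of_card_eq_finrank' (by simp)).ge

theorem perpBasis_repr_apply (v : EuclideanSpace ℝ (Fin 2)) (hv : ‖v‖ = 1)
    (y : EuclideanSpace ℝ (Fin 2)) :
    (perpBasis v hv).repr y 0 = ⟪v, y⟫ ∧ (perpBasis v hv).repr y 1 = ⟪perp v, y⟫ := by
  simp [OrthonormalBasis.repr_apply_apply, perpBasis, OrthonormalBasis.coe_mk]

end EuclideanSpace

theorem heis_stmt_11_general (J : EuclideanSpace ℝ (Fin 2) → ℝ) (g : ℝ → ℝ)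
    (hJrad : ∀ y, J y = g ‖y‖)
    (m' : ℝ → ℝ)
    (r : ℝ) (A : Matrix (Fin 2) (Fin 2) ℝ) (hA : A.IsSymm)
    (ν : EuclideanSpace ℝ (Fin 2)) (hν : ‖ν‖ = 1)
    (hAν : A.mulVec (fun i => ν i) = 0) (k : ℝ) (hk : A.trace = k) :
    ∫ y : EuclideanSpace ℝ (Fin 2),
        J y * m' (r + ⟪ν, y⟫) * dotProduct (fun i => y i)
          (A.mulVec fun i => y i)
      = k * ∫ y : EuclideanSpace ℝ (Fin 2), J y * m' (r + y 0) * (y 1) ^ 2 := by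
  set B := EuclideanSpace.perpBasis ν hν
  have hν' : dotProduct (fun i => ν i) (fun i => ν i) = 1 := by
    have h := real_inner_self_eq_norm_sq ν
    rwa [hν, one_pow, EuclideanSpace.inner_eq_star_dotProduct, star_trivial] at h
  have hpoint (y : EuclideanSpace ℝ (Fin 2)) :
      J y * m' (r + ⟪ν, y⟫) * dotProduct (fun i => y i) (A.mulVec fun i => y i)
        = k * (J (B.repr y) * m' (r + B.repr y 0) * B.repr y 1 ^ 2) := by
    obtain ⟨h0, h1⟩ := EuclideanSpace.perpBasis_repr_apply ν hν y
    rw [hA.dotProduct_mulVec_self_eq_trace_mul_sq hν' hAν, hk, hJrad, hJrad,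
      LinearIsometryEquiv.norm_map, h0, h1, EuclideanSpace.inner_perp_left]
    ring
  rw [integral_congr_ae (.of_forall hpoint), integral_const_mul,
    integral_comp B.repr fun x => J x * m' (r + x 0) * x 1 ^ 2]

/-- Reduction of the quadratic-form integral: for a radially symmetric kernel
and a symmetric 2×2 matrix A with unit null eigenvector ν and trace k,
∫ J(y) m'(r + ⟪ν,y⟫) (yᵀ A y) dy = k ∫ J(ŷ) m'(r + ŷ₁) ŷ₂² dŷ. -/
theorem heis_stmt_11 (J : EuclideanSpace ℝ (Fin 2) → ℝ) (g : ℝ → ℝ)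
    (hJ0 : ∀ y, 0 ≤ J y) (hJrad : ∀ y, J y = g ‖y‖) (hJint : Integrable J)
    (m' : ℝ → ℝ) (hm'meas : Measurable m') (C : ℝ) (hm'bd : ∀ s, |m' s| ≤ C)
    (r : ℝ) (A : Matrix (Fin 2) (Fin 2) ℝ) (hA : A.IsSymm)
    (ν : EuclideanSpace ℝ (Fin 2)) (hν : ‖ν‖ = 1)
    (hAν : A.mulVec (fun i => ν i) = 0) (k : ℝ) (hk : A.trace = k) :
    ∫ y : EuclideanSpace ℝ (Fin 2),
        J y * m' (r + ⟪ν, y⟫) * dotProduct (fun i => y i)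
          (A.mulVec fun i => y i)
      = k * ∫ y : EuclideanSpace ℝ (Fin 2), J y * m' (r + y 0) * (y 1) ^ 2 :=
  heis_stmt_11_general J g hJrad m' r A hA ν hν hAν k hk
end

section
/- If J is nonnegative and the mean field equation ∂_t w = -w + tanh(β(J*w + a)) admits classical solutions w1, w2 with w1(0,·) ≤ w2(0,·) on R^N, then w1(t,·) ≤ w2(t,·) for all t > 0 (comparison principle). -/
open MeasureTheory

/-- Derivative of `tanh`. -/
lemma heis_tanh_hasDerivAt (x : ℝ) :
    HasDerivAt Real.tanh (1 / Real.cosh x ^ 2) x := by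
  have h := (Real.hasDerivAt_sinh x).div (Real.hasDerivAt_cosh x) (Real.cosh_pos x).ne'
  have hf : (Real.sinh / Real.cosh) = Real.tanh :=
    funext fun y => (Real.tanh_eq_sinh_div_cosh y).symm
  rw [hf] at h
  have hnum : Real.cosh x * Real.cosh x - Real.sinh x * Real.sinh x = 1 := by
    nlinarith [Real.cosh_sq_sub_sinh_sq x]
  rwa [hnum] at h

/-- One-sided Lipschitz bound for `tanh`. -/
lemma heis_tanh_sub_le (p q : ℝ) : Real.tanh p - Real.tanh q ≤ max (p - q) 0 := by
  have hderiv_nonneg : ∀ x : ℝ, 0 ≤ 1 / Real.cosh x ^ 2 := fun x =>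
    div_nonneg zero_le_one (sq_nonneg _)
  rcases le_total p q with h | h
  · have hm : Monotone Real.tanh :=
      monotone_of_deriv_nonneg (fun x => (heis_tanh_hasDerivAt x).differentiableAt)
        (fun x => by rw [(heis_tanh_hasDerivAt x).deriv]; exact hderiv_nonneg x)
    exact le_trans (sub_nonpos.2 (hm h)) (le_max_right _ _)
  · have hlip : ‖Real.tanh p - Real.tanh q‖ ≤ 1 * ‖p - q‖ := by
      refine Convex.norm_image_sub_le_of_norm_hasDerivWithin_le
        (f' := fun x => 1 / Real.cosh x ^ 2)
        (fun x _ => (heis_tanh_hasDerivAt x).hasDerivWithinAt)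
        (fun x _ => ?_) convex_univ (Set.mem_univ q) (Set.mem_univ p)
      rw [Real.norm_eq_abs, abs_of_nonneg (hderiv_nonneg x)]
      have h1 : (1:ℝ) ≤ Real.cosh x ^ 2 := by nlinarith [Real.one_le_cosh x]
      rw [div_le_one (by linarith)]
      exact h1
    rw [one_mul, Real.norm_eq_abs, Real.norm_eq_abs] at hlip
    calc Real.tanh p - Real.tanh q ≤ |Real.tanh p - Real.tanh q| := le_abs_self _
      _ ≤ |p - q| := hlip
      _ = p - q := abs_of_nonneg (by linarith)
      _ ≤ max (p - q) 0 := le_max_left _ _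

/-- Comparison principle for the mean field equation
∂_t w = -w + tanh(β(J*w + a)) with nonnegative kernel J. -/
theorem heis_stmt_15 (N : ℕ) (J : EuclideanSpace ℝ (Fin N) → ℝ)
    (hJ0 : ∀ x, 0 ≤ J x) (hJint : Integrable J)
    (β a : ℝ) (hβ : 0 < β)
    (w₁ w₂ : ℝ → EuclideanSpace ℝ (Fin N) → ℝ)
    (hw₁cont : Continuous fun p : ℝ × EuclideanSpace ℝ (Fin N) => w₁ p.1 p.2)
    (hw₂cont : Continuous fun p : ℝ × EuclideanSpace ℝ (Fin N) => w₂ p.1 p.2)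
    (C : ℝ) (hw₁bd : ∀ t x, |w₁ t x| ≤ C) (hw₂bd : ∀ t x, |w₂ t x| ≤ C)
    (hw₁eq : ∀ t ≥ 0, ∀ x, HasDerivAt (fun s => w₁ s x)
      (-(w₁ t x) + Real.tanh (β * ((∫ y, J (x - y) * w₁ t y) + a))) t)
    (hw₂eq : ∀ t ≥ 0, ∀ x, HasDerivAt (fun s => w₂ s x)
      (-(w₂ t x) + Real.tanh (β * ((∫ y, J (x - y) * w₂ t y) + a))) t)
    (h0 : ∀ x, w₁ 0 x ≤ w₂ 0 x) :
    ∀ t > 0, ∀ x, w₁ t x ≤ w₂ t x := by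
  intro t₀ ht₀ x₀
  have hC : 0 ≤ C := le_trans (abs_nonneg _) (hw₁bd 0 x₀)
  set I : ℝ := ∫ y, J y with hIdef
  have hI : 0 ≤ I := integral_nonneg hJ0
  set T : ℝ := t₀ with hTdef
  set K₁ : ℝ := Real.exp T * (β * I) + 1 with hK₁def
  have hK₁pos : 0 < K₁ := by
    have := Real.exp_pos T
    nlinarith [mul_nonneg hβ.le hI]
  -- continuity of time-slices
  have hw1x : ∀ x, Continuous fun s : ℝ => w₁ s x := fun x =>
    hw₁cont.comp (continuous_id.prodMk continuous_const)
  have hw2x : ∀ x, Continuous fun s : ℝ => w₂ s x := fun x =>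
    hw₂cont.comp (continuous_id.prodMk continuous_const)
  -- integrability facts
  have hJx : ∀ x : EuclideanSpace ℝ (Fin N), Integrable fun y => J (x - y) :=
    fun x => hJint.comp_sub_left x
  have hintw : ∀ (w : ℝ → EuclideanSpace ℝ (Fin N) → ℝ),
      Continuous (fun p : ℝ × EuclideanSpace ℝ (Fin N) => w p.1 p.2) →
      (∀ t x, |w t x| ≤ C) → ∀ (s : ℝ) (x : EuclideanSpace ℝ (Fin N)),
      Integrable fun y => J (x - y) * w s y := by
    intro w hwc hwb s x
    have hmw : Continuous fun y : EuclideanSpace ℝ (Fin N) => w s y :=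
      hwc.comp (continuous_const.prodMk continuous_id)
    have h1 : Integrable fun y => w s y * J (x - y) :=
      (hJx x).bdd_mul (c := C) hmw.aestronglyMeasurable
        (Filter.Eventually.of_forall fun y => by
          simpa [Real.norm_eq_abs] using hwb s y)
    exact h1.congr (Filter.Eventually.of_forall fun y => mul_comm _ _)
  -- translation invariance of the integral of J
  have hJtrans : ∀ x : EuclideanSpace ℝ (Fin N), (∫ y, J (x - y)) = I :=
    fun x => integral_sub_left_eq_self J volume x
  -- factorial cast facts
  have hfacpos : ∀ n : ℕ, (0:ℝ) < (n.factorial : ℝ) := fun n => by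
    exact_mod_cast Nat.factorial_pos n
  -- Key induction
  have key : ∀ n : ℕ, ∀ t ∈ Set.Icc (0:ℝ) T, ∀ x,
      w₁ t x - w₂ t x ≤ 2 * C * K₁ ^ n * t ^ n / (n.factorial : ℝ) := by
    intro n
    induction n with
    | zero =>
      intro t ht x
      simp only [pow_zero, Nat.factorial_zero, Nat.cast_one, mul_one, div_one]
      have h1 := abs_le.1 (hw₁bd t x)
      have h2 := abs_le.1 (hw₂bd t x)
      linarith [h1.2, h2.1]
    | succ n ih =>
      intro t ht x
      set P : ℝ → ℝ := fun r => 2 * C * K₁ ^ (n + 1) * r ^ (n + 1) / ((n + 1).factorial : ℝ)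
        with hPdef
      set F : ℝ → ℝ := fun r => P r - Real.exp r * (w₁ r x - w₂ r x) with hFdef
      have hfac : ((n + 1).factorial : ℝ) = ((n:ℝ) + 1) * (n.factorial : ℝ) := by
        rw [Nat.factorial_succ]; push_cast; ring
      have hPder : ∀ r : ℝ,
          HasDerivAt P (K₁ * (2 * C * K₁ ^ n * r ^ n / (n.factorial : ℝ))) r := by
        intro r
        have h := ((hasDerivAt_pow (n + 1) r).const_mul
          (2 * C * K₁ ^ (n + 1))).div_const ((n + 1).factorial : ℝ)
        refine h.congr_deriv ?_
        have hn1 : n + 1 - 1 = n := rfl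
        rw [hn1, hfac, pow_succ]
        have h1 : (n.factorial : ℝ) ≠ 0 := (hfacpos n).ne'
        have h2 : ((n:ℝ) + 1) ≠ 0 := by positivity
        field_simp
        push_cast
        ring
      have hud : ∀ r : ℝ, 0 ≤ r →
          HasDerivAt (fun s => Real.exp s * (w₁ s x - w₂ s x))
            (Real.exp r * (Real.tanh (β * ((∫ y, J (x - y) * w₁ r y) + a))
              - Real.tanh (β * ((∫ y, J (x - y) * w₂ r y) + a)))) r := by
        intro r hr
        have h := (Real.hasDerivAt_exp r).mul ((hw₁eq r hr x).sub (hw₂eq r hr x))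
        refine h.congr_deriv ?_
        simp only [Pi.sub_apply]
        ring
      have hFder : ∀ r : ℝ, 0 ≤ r →
          HasDerivAt F (K₁ * (2 * C * K₁ ^ n * r ^ n / (n.factorial : ℝ))
            - Real.exp r * (Real.tanh (β * ((∫ y, J (x - y) * w₁ r y) + a))
              - Real.tanh (β * ((∫ y, J (x - y) * w₂ r y) + a)))) r :=
        fun r hr => (hPder r).sub (hud r hr)
      have hFcont : Continuous F := by
        apply Continuous.sub
        · exact (continuous_const.mul (continuous_pow (n + 1))).div_const _
        · exact Real.continuous_exp.mul ((hw1x x).sub (hw2x x))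
      have hmono : MonotoneOn F (Set.Icc 0 t) := by
        apply monotoneOn_of_deriv_nonneg (convex_Icc 0 t) hFcont.continuousOn
        · intro r hr
          rw [interior_Icc] at hr
          exact (hFder r hr.1.le).differentiableAt.differentiableWithinAt
        · intro r hr
          rw [interior_Icc] at hr
          rw [(hFder r hr.1.le).deriv]
          rw [sub_nonneg]
          -- main estimate
          set A₁ : ℝ := ∫ y, J (x - y) * w₁ r y with hA₁def
          set A₂ : ℝ := ∫ y, J (x - y) * w₂ r y with hA₂def
          set cn : ℝ := 2 * C * K₁ ^ n * r ^ n / (n.factorial : ℝ) with hcndef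
          have hcn : 0 ≤ cn := by
            apply div_nonneg _ (hfacpos n).le
            have := pow_nonneg hK₁pos.le n
            have := pow_nonneg hr.1.le n
            positivity
          have hint1 := hintw w₁ hw₁cont hw₁bd r x
          have hint2 := hintw w₂ hw₂cont hw₂bd r x
          have hrT : r ∈ Set.Icc (0:ℝ) T := ⟨hr.1.le, hr.2.le.trans ht.2⟩
          have hAsub : A₁ - A₂ ≤ I * cn := by
            have hsub : A₁ - A₂ = ∫ y, J (x - y) * (w₁ r y - w₂ r y) := by
              rw [hA₁def, hA₂def, ← integral_sub hint1 hint2]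
              congr 1; funext y; ring
            have hintsub : Integrable fun y => J (x - y) * (w₁ r y - w₂ r y) :=
              (hint1.sub hint2).congr (Filter.Eventually.of_forall fun y => by simp only [Pi.sub_apply]; ring)
            have hmonoI : (∫ y, J (x - y) * (w₁ r y - w₂ r y)) ≤ ∫ y, J (x - y) * cn := by
              apply integral_mono hintsub ((hJx x).mul_const cn)
              intro y
              exact mul_le_mul_of_nonneg_left (ih r hrT y) (hJ0 _)
            have heq : (∫ y, J (x - y) * cn) = I * cn := by
              rw [integral_mul_const, hJtrans x]
            rw [hsub]
            rw [heq] at hmonoI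
            exact hmonoI
          have hg : Real.tanh (β * (A₁ + a)) - Real.tanh (β * (A₂ + a)) ≤ β * (I * cn) := by
            refine le_trans (heis_tanh_sub_le _ _) (max_le ?_ ?_)
            · have : β * (A₁ + a) - β * (A₂ + a) = β * (A₁ - A₂) := by ring
              rw [this]
              exact mul_le_mul_of_nonneg_left hAsub hβ.le
            · exact mul_nonneg hβ.le (mul_nonneg hI hcn)
          have hβIcn : 0 ≤ β * (I * cn) := mul_nonneg hβ.le (mul_nonneg hI hcn)
          calc Real.exp r * (Real.tanh (β * (A₁ + a)) - Real.tanh (β * (A₂ + a)))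
              ≤ Real.exp r * (β * (I * cn)) :=
                mul_le_mul_of_nonneg_left hg (Real.exp_pos r).le
            _ ≤ Real.exp T * (β * (I * cn)) :=
                mul_le_mul_of_nonneg_right
                  (Real.exp_le_exp.2 (le_trans hr.2.le ht.2)) hβIcn
            _ = (Real.exp T * (β * I)) * cn := by ring
            _ ≤ K₁ * cn := mul_le_mul_of_nonneg_right (by rw [hK₁def]; linarith) hcn
      have hF0 : 0 ≤ F 0 := by
        have hP0 : P 0 = 0 := by
          simp [hPdef, zero_pow (Nat.succ_ne_zero n)]
        simp only [hFdef, hP0, Real.exp_zero, one_mul, zero_sub, neg_nonneg, sub_nonpos]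
        exact h0 x
      have hFt : F 0 ≤ F t := hmono (Set.left_mem_Icc.2 ht.1) (Set.right_mem_Icc.2 ht.1) ht.1
      have hconc : Real.exp t * (w₁ t x - w₂ t x) ≤ P t := by
        have : 0 ≤ F t := le_trans hF0 hFt
        rw [hFdef] at this
        simp only [sub_nonneg] at this
        exact this
      have hPt : 0 ≤ P t := by
        rw [hPdef]
        apply div_nonneg _ (hfacpos (n+1)).le
        have h1 := pow_nonneg hK₁pos.le (n+1)
        have h2 := pow_nonneg ht.1 (n+1)
        positivity
      have hexp1 : 1 ≤ Real.exp t := Real.one_le_exp ht.1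
      rcases le_or_gt (w₁ t x - w₂ t x) 0 with hv | hv
      · exact le_trans hv hPt
      · have : w₁ t x - w₂ t x ≤ Real.exp t * (w₁ t x - w₂ t x) := by
          nlinarith
        exact le_trans this hconc
  -- take the limit n → ∞
  have hmem : t₀ ∈ Set.Icc (0:ℝ) T := ⟨ht₀.le, le_refl _⟩
  have hbound : ∀ n : ℕ, w₁ t₀ x₀ - w₂ t₀ x₀ ≤ 2 * C * ((K₁ * t₀) ^ n / (n.factorial : ℝ)) := by
    intro n
    have := key n t₀ hmem x₀
    calc w₁ t₀ x₀ - w₂ t₀ x₀ ≤ 2 * C * K₁ ^ n * t₀ ^ n / (n.factorial : ℝ) := this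
      _ = 2 * C * ((K₁ * t₀) ^ n / (n.factorial : ℝ)) := by rw [mul_pow]; ring
  have hlim : Filter.Tendsto (fun n : ℕ => 2 * C * ((K₁ * t₀) ^ n / (n.factorial : ℝ)))
      Filter.atTop (nhds 0) := by
    have h := FloorSemiring.tendsto_pow_div_factorial_atTop (K₁ * t₀)
    have := h.const_mul (2 * C)
    simpa using this
  have hfin : w₁ t₀ x₀ - w₂ t₀ x₀ ≤ 0 := ge_of_tendsto' hlim hbound
  linarith
end
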